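/- arXiv:2410.23493 — 8 statements merged into one kernel-verified Lean document; each statement's English description precedes it below -/
import Mathlib

section
/- Let n be a natural number and let U : Matrix (Fin n → ZMod 2) (Fin n → ZMod 2) ℂ be a linear operator on n qubits. Fix qubit indices i j : Fin n and angles θ φ : ℝ, and suppose that for all classical states x x' : Fin n → ZMod 2, U x' x ≠ 0 implies x' j = x i. Then D_j(φ) * U * D_i(θ) = U * D_i(θ + φ) and D_j(φ) * U * D_i(θ) = D_j(θ + φ) * U. (A phase gate applied to qubit i before U can be merged with a phase gate applied to qubit j after U.) -/
/-- The phase operator `D_f(θ)`: a diagonal matrix applying phase `e^{iθ}`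
conditional on the Boolean function `f` of the classical state. -/
noncomputable def phaseOp (n : ℕ) (f : (Fin n → ZMod 2) → ZMod 2) (θ : ℝ) :
    Matrix (Fin n → ZMod 2) (Fin n → ZMod 2) ℂ :=
  Matrix.diagonal fun x => Complex.exp (θ * Complex.I * ((f x).val : ℂ))

theorem phase_fold_qubit (n : ℕ) (U : Matrix (Fin n → ZMod 2) (Fin n → ZMod 2) ℂ)
    (i j : Fin n) (θ φ : ℝ)
    (h : ∀ x x' : Fin n → ZMod 2, U x' x ≠ 0 → x' j = x i) :
    phaseOp n (fun x => x j) φ * U * phaseOp n (fun x => x i) θ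
        = U * phaseOp n (fun x => x i) (θ + φ) ∧
      phaseOp n (fun x => x j) φ * U * phaseOp n (fun x => x i) θ
        = phaseOp n (fun x => x j) (θ + φ) * U := by
  constructor <;> ext x' x <;>
    simp only [phaseOp, Matrix.mul_diagonal, Matrix.diagonal_mul] <;>
    rcases eq_or_ne (U x' x) 0 with h0 | h0
  · simp [h0]
  · rw [h x x' h0, mul_right_comm, ← Complex.exp_add]
    push_cast
    ring_nf
  · simp [h0]
  · rw [h x x' h0, mul_right_comm, ← Complex.exp_add]
    push_cast
    ring_nf
end

section
/- Let n be a natural number, U : Matrix (Fin n → ZMod 2) (Fin n → ZMod 2) ℂ, and let R be a sound abstraction of U. Define relation powers by R^[0] = {(x, x') | x' = x} and R^[k+1] = {(x, x') | ∃ x'', (x, x'') ∈ R^[k] ∧ (x'', x') ∈ R}. Then for every natural number k, R^[k] is a sound abstraction of the matrix power U ^ k: whenever (U ^ k) x' x ≠ 0, one has (x, x') ∈ R^[k]. (This underlies the soundness of the Kleene closure for abstracting any number of iterations of a loop body.) -/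
/-- A relation on classical states is a sound abstraction of a linear operator `U`
if it contains every non-zero classical transition of `U`. -/
def SoundAbstraction (n : ℕ) (U : Matrix (Fin n → ZMod 2) (Fin n → ZMod 2) ℂ)
    (R : Set ((Fin n → ZMod 2) × (Fin n → ZMod 2))) : Prop :=
  ∀ x x' : Fin n → ZMod 2, U x' x ≠ 0 → (x, x') ∈ R

/-- Iterated relational composition: `relPow R 0` is the identity relation and
`relPow R (k+1)` composes `relPow R k` with `R`. -/
def relPow {α : Type*} (R : Set (α × α)) : ℕ → Set (α × α)
  | 0 => {p | p.2 = p.1}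
  | k + 1 => {p | ∃ x'', (p.1, x'') ∈ relPow R k ∧ (x'', p.2) ∈ R}

theorem soundAbstraction_pow (n : ℕ)
    (U : Matrix (Fin n → ZMod 2) (Fin n → ZMod 2) ℂ)
    (R : Set ((Fin n → ZMod 2) × (Fin n → ZMod 2)))
    (hR : SoundAbstraction n U R) :
    ∀ k : ℕ, ∀ x x' : Fin n → ZMod 2, (U ^ k) x' x ≠ 0 → (x, x') ∈ relPow R k := by
  intro k
  induction k with
  | zero =>
    intro x x' h
    simp [pow_zero, Matrix.one_apply] at h
    simpa [relPow] using h
  | succ k ih =>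
    intro x x' h
    rw [pow_succ'] at h
    rw [Matrix.mul_apply] at h
    obtain ⟨y, hy⟩ := Finset.exists_ne_zero_of_sum_ne_zero h
    have h1 : U x' y ≠ 0 := fun hz => hy.2 (by simp [hz])
    have h2 : (U ^ k) y x ≠ 0 := fun hz => hy.2 (by simp [hz])
    exact ⟨y, ih x y h2, hR y x' h1⟩
end

section
/- Let n be a natural number and let I be an ideal of MvPolynomial (Fin n) (ZMod 2). Then the ideal I ⊔ F_n (the sum of I with the field-equations ideal) is a radical ideal: if p ^ m ∈ I ⊔ F_n for some m ≥ 1, then p ∈ I ⊔ F_n. -/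
/-- The field-equations ideal of `MvPolynomial (Fin n) (ZMod 2)`,
generated by the polynomials `X i ^ 2 - X i`. -/
noncomputable def fieldEqnIdeal (n : ℕ) : Ideal (MvPolynomial (Fin n) (ZMod 2)) :=
  Ideal.span {p | ∃ i : Fin n, p = MvPolynomial.X i ^ 2 - MvPolynomial.X i}

lemma sq_sub_self_mem (n : ℕ) (p : MvPolynomial (Fin n) (ZMod 2)) :
    p ^ 2 - p ∈ fieldEqnIdeal n := by
  induction p using MvPolynomial.induction_on with
  | C a =>
      have : a ^ 2 = a := by revert a; decide
      simp [← MvPolynomial.C_pow, this]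
  | add p q hp hq =>
      have h2 : (p + q) ^ 2 = p ^ 2 + q ^ 2 := by
        have := add_pow_char (R := MvPolynomial (Fin n) (ZMod 2)) (p := 2) p q
        simpa using this
      have : (p + q) ^ 2 - (p + q) = (p ^ 2 - p) + (q ^ 2 - q) := by
        rw [h2]; ring
      rw [this]
      exact Ideal.add_mem _ hp hq
  | mul_X p i hp =>
      have hXi : (MvPolynomial.X i ^ 2 - MvPolynomial.X i : MvPolynomial (Fin n) (ZMod 2)) ∈
          fieldEqnIdeal n := Ideal.subset_span ⟨i, rfl⟩
      have : (p * MvPolynomial.X i) ^ 2 - p * MvPolynomial.X i =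
          p ^ 2 * (MvPolynomial.X i ^ 2 - MvPolynomial.X i) +
          (p ^ 2 - p) * MvPolynomial.X i := by ring
      rw [this]
      exact Ideal.add_mem _ (Ideal.mul_mem_left _ _ hXi) (Ideal.mul_mem_right _ _ hp)

lemma pow_sub_self_mem (n : ℕ) (p : MvPolynomial (Fin n) (ZMod 2)) :
    ∀ m : ℕ, 1 ≤ m → p ^ m - p ∈ fieldEqnIdeal n := by
  intro m hm
  induction m with
  | zero => omega
  | succ k ih =>
      rcases Nat.eq_or_lt_of_le hm with h | h
      · simp [← h]
      · have hk : 1 ≤ k := by omega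
        have : p ^ (k + 1) - p = p * (p ^ k - p) + (p ^ 2 - p) := by ring
        rw [this]
        exact Ideal.add_mem _ (Ideal.mul_mem_left _ _ (ih hk)) (sq_sub_self_mem n p)

theorem sup_fieldEqnIdeal_isRadical (n : ℕ) (I : Ideal (MvPolynomial (Fin n) (ZMod 2))) :
    ∀ p : MvPolynomial (Fin n) (ZMod 2), ∀ m : ℕ, 1 ≤ m →
      p ^ m ∈ I ⊔ fieldEqnIdeal n → p ∈ I ⊔ fieldEqnIdeal n := by
  intro p m hm hpm
  have h1 : p ^ m - p ∈ I ⊔ fieldEqnIdeal n :=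
    Ideal.mem_sup_right (pow_sub_self_mem n p m hm)
  have := Ideal.sub_mem _ hpm h1
  simpa using this
end

section
/- Let n be a natural number and let I be an ideal of MvPolynomial (Fin n) (ZMod 2). Then the vanishing ideal of the zero locus of I over the points (Fin n → ZMod 2) equals I ⊔ F_n; that is, a polynomial p ∈ MvPolynomial (Fin n) (ZMod 2) vanishes at every common zero in (ZMod 2)^n of the polynomials in I if and only if p ∈ I ⊔ F_n. (Nullstellensatz over the finite field F₂: adjoining the field equations computes 𝕀(𝕍(I)).) -/
open MvPolynomial

theorem exists_lt_pow_eq_pow_of_pow_eq_self {M : Type*} [Monoid M] {x : M} {q : ℕ} (hq : 1 < q)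
    (hx : x ^ q = x) (k : ℕ) : ∃ j < q, x ^ k = x ^ j := by
  induction k using Nat.strong_induction_on with
  | _ k ih =>
    by_cases hk : k < q
    · exact ⟨k, hk, rfl⟩
    obtain ⟨j, hj, hkj⟩ := ih (k - (q - 1)) (by omega)
    refine ⟨j, hj, ?_⟩
    calc x ^ k = x ^ (k - q) * x ^ q := by rw [← pow_add, Nat.sub_add_cancel (not_lt.mp hk)]
      _ = x ^ (k - (q - 1)) := by rw [hx, ← pow_succ]; congr 1; omega
      _ = x ^ j := hkj

-- `eq_zero_of_eval_eq_zero` is stated in Mathlib for `σ` and `K` in a common universe.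
universe u

namespace MvPolynomial

noncomputable def fieldEquationsIdeal (σ K : Type*) [CommRing K] [Fintype K] :
    Ideal (MvPolynomial σ K) :=
  Ideal.span (Set.range fun i => X i ^ Fintype.card K - X i)

theorem eval_eq_zero_of_mem_fieldEquationsIdeal {σ K : Type*} [Field K] [Fintype K]
    {p : MvPolynomial σ K} (hp : p ∈ fieldEquationsIdeal σ K) (x : σ → K) : eval x p = 0 := by
  have : fieldEquationsIdeal σ K ≤ vanishingIdeal K (Set.univ : Set (σ → K)) := by
    refine Ideal.span_le.mpr ?_
    rintro _ ⟨i, rfl⟩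
    simp [mem_vanishingIdeal_iff, FiniteField.pow_card]
  exact mem_vanishingIdeal_iff.mp (this hp) x trivial

variable {σ K : Type u} [Fintype σ] [Field K] [Fintype K]

theorem exists_mem_restrictDegree_sub_mem_fieldEquationsIdeal (p : MvPolynomial σ K) :
    ∃ r ∈ restrictDegree σ K (Fintype.card K - 1), p - r ∈ fieldEquationsIdeal σ K := by
  set π := Ideal.Quotient.mk (fieldEquationsIdeal σ K)
  suffices ∃ r ∈ restrictDegree σ K (Fintype.card K - 1), π p = π r by
    obtain ⟨r, hr, hpr⟩ := this
    exact ⟨r, hr, Ideal.Quotient.eq.mp hpr⟩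
  induction p using MvPolynomial.induction_on' with
  | monomial d c =>
    have hX (i : σ) : π (X i) ^ Fintype.card K = π (X i) := by
      rw [← map_pow, Ideal.Quotient.eq]
      exact Ideal.subset_span ⟨i, rfl⟩
    choose j hj hdj using fun i =>
      exists_lt_pow_eq_pow_of_pow_eq_self Fintype.one_lt_card (hX i) (d i)
    refine ⟨monomial (Finsupp.equivFunOnFinite.symm j) c, ?_, ?_⟩
    · simp only [restrictDegree, monomial_mem_restrictSupport]
      exact Or.inl fun i => Nat.le_sub_one_of_lt (hj i)
    · simp only [monomial_eq, Finsupp.prod_fintype _ _ (fun _ => pow_zero _), map_mul, map_prod,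
        map_pow, hdj, Finsupp.coe_equivFunOnFinite_symm]
  | add p p' hp hp' =>
    obtain ⟨r, hr, hpr⟩ := hp
    obtain ⟨r', hr', hpr'⟩ := hp'
    exact ⟨r + r', add_mem hr hr', by rw [map_add, map_add, hpr, hpr']⟩

theorem mem_fieldEquationsIdeal_iff {p : MvPolynomial σ K} :
    p ∈ fieldEquationsIdeal σ K ↔ ∀ x : σ → K, eval x p = 0 := by
  refine ⟨eval_eq_zero_of_mem_fieldEquationsIdeal, fun hp => ?_⟩
  obtain ⟨r, hr, hpr⟩ := exists_mem_restrictDegree_sub_mem_fieldEquationsIdeal p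
  have hr0 : r = 0 := eq_zero_of_eval_eq_zero σ K r (fun x => by
    simpa [hp x] using eval_eq_zero_of_mem_fieldEquationsIdeal hpr x) hr
  simpa [hr0] using hpr

theorem sub_sum_indicator_mem_fieldEquationsIdeal [DecidableEq σ] (p : MvPolynomial σ K) :
    p - ∑ a, C (eval a p) * indicator a ∈ fieldEquationsIdeal σ K := by
  refine mem_fieldEquationsIdeal_iff.mpr fun x => ?_
  rw [map_sub, map_sum, Finset.sum_eq_single x (fun a _ hax => ?_) (by simp)]
  · simp [eval_indicator_apply_eq_one]
  · simp [eval_indicator_apply_eq_zero x a (Ne.symm hax)]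

theorem indicator_mem_sup_fieldEquationsIdeal {I : Ideal (MvPolynomial σ K)} {a : σ → K}
    (ha : a ∉ zeroLocus K I) : indicator a ∈ I ⊔ fieldEquationsIdeal σ K := by
  obtain ⟨g, hgI, hga⟩ : ∃ g ∈ I, eval a g ≠ 0 := by simpa [mem_zeroLocus_iff] using ha
  have hgF : C (eval a g)⁻¹ * indicator a * g - indicator a ∈ fieldEquationsIdeal σ K := by
    refine mem_fieldEquationsIdeal_iff.mpr fun x => ?_
    rcases eq_or_ne x a with rfl | hxa
    · simp [eval_indicator_apply_eq_one, hga]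
    · simp [eval_indicator_apply_eq_zero x a hxa]
  have hgI' : C (eval a g)⁻¹ * indicator a * g ∈ I := I.mul_mem_left _ hgI
  simpa using Ideal.sub_mem _ (Ideal.mem_sup_left hgI') (Ideal.mem_sup_right (S := I) hgF)

theorem vanishingIdeal_zeroLocus_eq_sup_fieldEquationsIdeal (I : Ideal (MvPolynomial σ K)) :
    vanishingIdeal K (zeroLocus K I) = I ⊔ fieldEquationsIdeal σ K := by
  classical
  refine le_antisymm (fun p hp => ?_) (sup_le (le_vanishingIdeal_zeroLocus I) fun p hp => ?_)
  · have hsum : ∑ a, C (eval a p) * indicator a ∈ I ⊔ fieldEquationsIdeal σ K := by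
      refine Ideal.sum_mem _ fun a _ => ?_
      by_cases ha : a ∈ zeroLocus K I
      · have hpa : eval a p = 0 := mem_vanishingIdeal_iff.mp hp a ha
        rw [hpa, C_0, zero_mul]
        exact zero_mem _
      · exact Ideal.mul_mem_left _ _ (indicator_mem_sup_fieldEquationsIdeal ha)
    simpa using Ideal.add_mem _ hsum
      (Ideal.mem_sup_right (S := I) (sub_sum_indicator_mem_fieldEquationsIdeal p))
  · exact mem_vanishingIdeal_iff.mpr fun x _ => eval_eq_zero_of_mem_fieldEquationsIdeal hp x

end MvPolynomial

theorem fieldEqnIdeal_eq_fieldEquationsIdeal (n : ℕ) :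
    fieldEqnIdeal n = fieldEquationsIdeal (Fin n) (ZMod 2) := by
  simp only [fieldEqnIdeal, fieldEquationsIdeal, ZMod.card]
  congr 1
  ext p
  simp [eq_comm]

theorem vanishingIdeal_zeroLocus_eq_sup_fieldEqnIdeal (n : ℕ)
    (I : Ideal (MvPolynomial (Fin n) (ZMod 2))) :
    MvPolynomial.vanishingIdeal (ZMod 2) (MvPolynomial.zeroLocus (ZMod 2) I) = I ⊔ fieldEqnIdeal n := by
  rw [fieldEqnIdeal_eq_fieldEquationsIdeal]
  exact vanishingIdeal_zeroLocus_eq_sup_fieldEquationsIdeal I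
end

section
/- Let n be a natural number. A polynomial p ∈ MvPolynomial (Fin n) (ZMod 2) satisfies MvPolynomial.eval x p = 0 for every point x : Fin n → ZMod 2 if and only if p belongs to the field-equations ideal F_n. Equivalently, the kernel of the evaluation algebra homomorphism MvPolynomial (Fin n) (ZMod 2) → ((Fin n → ZMod 2) → ZMod 2), sending p to the function x ↦ MvPolynomial.eval x p, is exactly F_n. -/
open MvPolynomial

lemma fieldEqnIdeal_eval_zero {n : ℕ} {p : MvPolynomial (Fin n) (ZMod 2)}
    (hp : p ∈ fieldEqnIdeal n) (x : Fin n → ZMod 2) : eval x p = 0 := by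
  have : fieldEqnIdeal n ≤ RingHom.ker (eval x) := by
    rw [fieldEqnIdeal, Ideal.span_le]
    rintro q ⟨i, rfl⟩
    simp only [SetLike.mem_coe, RingHom.mem_ker, map_sub, map_pow, eval_X]
    have h2 : ∀ a : ZMod 2, a ^ 2 = a := by decide
    rw [h2, sub_self]
  exact this hp

/-- Reduction: every polynomial is congruent mod the ideal to a multilinear one. -/
lemma exists_multilinear {n : ℕ} (p : MvPolynomial (Fin n) (ZMod 2)) :
    ∃ q : MvPolynomial (Fin n) (ZMod 2),
      q ∈ restrictDegree (Fin n) (ZMod 2) 1 ∧ p - q ∈ fieldEqnIdeal n := by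
  classical
  set I := fieldEqnIdeal n
  set π := Ideal.Quotient.mk I with hπ
  have hidem : ∀ i : Fin n, IsIdempotentElem (π (X i)) := by
    intro i
    have hmem : (X i ^ 2 - X i : MvPolynomial (Fin n) (ZMod 2)) ∈ I :=
      Ideal.subset_span ⟨i, rfl⟩
    have h0 : π (X i ^ 2 - X i) = 0 := (Ideal.Quotient.eq_zero_iff_mem).2 hmem
    have h2 : π (X i) ^ 2 = π (X i) :=
      sub_eq_zero.mp (by simpa [map_sub, map_pow] using h0)
    show π (X i) * π (X i) = π (X i)
    rw [← pow_two]; exact h2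
  have key : ∀ (i : Fin n) (k : ℕ), π (X i) ^ k = π (X i) ^ min k 1 := by
    intro i k
    cases k with
    | zero => simp
    | succ m => rw [(hidem i).pow_succ_eq m]; simp
  -- squish an exponent vector to a multilinear one
  let sq : (Fin n →₀ ℕ) → (Fin n →₀ ℕ) := fun d =>
    Finsupp.mapRange (fun k => min k 1) (by simp) d
  have hmono : ∀ (d : Fin n →₀ ℕ) (c : ZMod 2),
      π (monomial d c) = π (monomial (sq d) c) := by
    intro d c
    have hrepr : ∀ e : Fin n →₀ ℕ,
        (monomial e c : MvPolynomial (Fin n) (ZMod 2)) =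
          C c * ∏ i : Fin n, X i ^ e i := by
      intro e
      rw [monomial_eq, Finsupp.prod_fintype]
      intro i; simp
    rw [hrepr, hrepr, map_mul, map_mul, map_prod, map_prod]
    congr 1
    refine Finset.prod_congr rfl fun i _ => ?_
    rw [map_pow, map_pow, key i (d i)]
    simp [sq, Finsupp.mapRange_apply]
  refine ⟨∑ d ∈ p.support, monomial (sq d) (coeff d p), ?_, ?_⟩
  · rw [mem_restrictDegree]
    intro s hs i
    obtain ⟨d, _, hd⟩ := Finset.mem_biUnion.mp (MvPolynomial.support_sum hs)
    have := support_monomial_subset hd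
    rw [Finset.mem_singleton] at this
    subst this
    simp [sq, Finsupp.mapRange_apply]
  · rw [← Ideal.Quotient.eq_zero_iff_mem, map_sub, sub_eq_zero]
    show π p = _
    conv_lhs => rw [← p.support_sum_monomial_coeff]
    rw [map_sum, map_sum]
    exact Finset.sum_congr rfl fun d _ => hmono d (coeff d p)

theorem mem_fieldEqnIdeal_iff_eval_zero (n : ℕ) :
    (∀ p : MvPolynomial (Fin n) (ZMod 2),
        (∀ x : Fin n → ZMod 2, MvPolynomial.eval x p = 0) ↔ p ∈ fieldEqnIdeal n) ∧
      RingHom.ker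
          ((MvPolynomial.aeval
              (fun i : Fin n => (fun x : Fin n → ZMod 2 => x i) :
                Fin n → ((Fin n → ZMod 2) → ZMod 2))).toRingHom) =
        fieldEqnIdeal n := by
  have main : ∀ p : MvPolynomial (Fin n) (ZMod 2),
      (∀ x : Fin n → ZMod 2, MvPolynomial.eval x p = 0) ↔ p ∈ fieldEqnIdeal n := by
    intro p
    constructor
    · intro h
      obtain ⟨q, hq, hpq⟩ := exists_multilinear p
      have hqeval : ∀ x : Fin n → ZMod 2, eval x q = 0 := by
        intro x
        have h1 := fieldEqnIdeal_eval_zero hpq x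
        have h2 := h x
        rw [map_sub, h2, zero_sub, neg_eq_zero] at h1
        exact h1
      have hq0 : q = 0 :=
        MvPolynomial.eq_zero_of_eval_eq_zero (Fin n) (ZMod 2) q hqeval (by simpa [ZMod.card] using hq)
      rw [hq0, sub_zero] at hpq
      exact hpq
    · intro hp x
      exact fieldEqnIdeal_eval_zero hp x
  refine ⟨main, ?_⟩
  have haux : ∀ (p : MvPolynomial (Fin n) (ZMod 2)) (x : Fin n → ZMod 2),
      (MvPolynomial.aeval
          (fun i : Fin n => (fun x : Fin n → ZMod 2 => x i) :
            Fin n → ((Fin n → ZMod 2) → ZMod 2)) p) x = eval x p := by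
    intro p x
    induction p using MvPolynomial.induction_on with
    | C a => simp [Pi.algebraMap_apply, algebraMap_eq]
    | add p q hp hq => simp [hp, hq]
    | mul_X p i hp => simp [hp]
  ext p
  rw [RingHom.mem_ker, ← main p]
  constructor
  · intro h x
    have hx := congrFun h x
    rw [Pi.zero_apply] at hx
    rw [← haux p x]
    exact hx
  · intro h
    funext x
    rw [Pi.zero_apply]
    exact (haux p x).trans (h x)
end

section
/- Let n be a natural number and let I J be ideals of MvPolynomial (Fin n) (ZMod 2) each containing the field-equations ideal F_n (i.e. F_n ≤ I and F_n ≤ J). Then I ⊓ J = (I * J) ⊔ F_n. (Hence in the multilinear setting over F₂ the ideal product, used as the join of transition ideals, computes the same variety and indeed the same ideal as the ideal intersection.) -/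
lemma sq_sub_self_mem_fieldEqnIdeal (n : ℕ) (f : MvPolynomial (Fin n) (ZMod 2)) :
    f ^ 2 - f ∈ fieldEqnIdeal n := by
  induction f using MvPolynomial.induction_on with
  | C a =>
    have ha : a ^ 2 - a = 0 := by revert a; decide
    rw [← map_pow, ← map_sub, ha, map_zero]
    exact (fieldEqnIdeal n).zero_mem
  | add p q hp hq =>
    have h2 : (p + q) ^ 2 - (p + q) = (p ^ 2 - p) + (q ^ 2 - q) + 2 * (p * q) := by ring
    have h0 : (2 : MvPolynomial (Fin n) (ZMod 2)) = 0 := by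
      have := CharP.cast_eq_zero (MvPolynomial (Fin n) (ZMod 2)) 2
      simpa using this
    rw [h2, h0, zero_mul, add_zero]
    exact add_mem hp hq
  | mul_X p i hp =>
    have h : (p * MvPolynomial.X i) ^ 2 - p * MvPolynomial.X i
        = p ^ 2 * (MvPolynomial.X i ^ 2 - MvPolynomial.X i)
          + (p ^ 2 - p) * MvPolynomial.X i := by ring
    rw [h]
    exact add_mem
      (Ideal.mul_mem_left _ _ (Ideal.subset_span ⟨i, rfl⟩))
      (Ideal.mul_mem_right _ _ hp)

theorem inf_eq_mul_sup_fieldEqnIdeal (n : ℕ)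
    (I J : Ideal (MvPolynomial (Fin n) (ZMod 2)))
    (hI : fieldEqnIdeal n ≤ I) (hJ : fieldEqnIdeal n ≤ J) :
    I ⊓ J = (I * J) ⊔ fieldEqnIdeal n := by
  apply le_antisymm
  · intro f hf
    have hsq : f * f ∈ I * J := Ideal.mul_mem_mul hf.1 hf.2
    have hF : f ^ 2 - f ∈ fieldEqnIdeal n := sq_sub_self_mem_fieldEqnIdeal n f
    have hrw : f = f * f - (f ^ 2 - f) := by ring
    rw [hrw]
    exact sub_mem (Ideal.mem_sup_left hsq) (Ideal.mem_sup_right hF)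
  · exact sup_le Ideal.mul_le_inf (le_inf hI hJ)
end

section
/- Let n, k, k' be natural numbers. Let Ψ be the path-sum matrix with amplitude Φ : (Fin n → ZMod 2) → (Fin k → ZMod 2) → ℂ and transition function f, i.e. Ψ x' x = ∑ y, if f x y = x' then Φ x y else 0, and let Ψ' be the path-sum matrix with amplitude Φ' and transition function g : (Fin n → ZMod 2) → (Fin k' → ZMod 2) → (Fin n → ZMod 2). Then the matrix product Ψ' * Ψ (apply Ψ first, then Ψ') satisfies: whenever (Ψ' * Ψ) x' x ≠ 0, there exist x'' and y, y' with f x y = x'' and g x'' y' = x'. Hence the relational composition of the transition relations of Ψ and Ψ' is a sound abstraction of the composed operator. -/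
theorem pathSum_comp_transition_sound (n k k' : ℕ)
    (Φ : (Fin n → ZMod 2) → (Fin k → ZMod 2) → ℂ)
    (f : (Fin n → ZMod 2) → (Fin k → ZMod 2) → (Fin n → ZMod 2))
    (Φ' : (Fin n → ZMod 2) → (Fin k' → ZMod 2) → ℂ)
    (g : (Fin n → ZMod 2) → (Fin k' → ZMod 2) → (Fin n → ZMod 2))
    (Ψ Ψ' : Matrix (Fin n → ZMod 2) (Fin n → ZMod 2) ℂ)
    (hΨ : ∀ x' x : Fin n → ZMod 2,
      Ψ x' x = ∑ y : Fin k → ZMod 2, if f x y = x' then Φ x y else 0)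
    (hΨ' : ∀ x' x : Fin n → ZMod 2,
      Ψ' x' x = ∑ y' : Fin k' → ZMod 2, if g x y' = x' then Φ' x y' else 0) :
    ∀ x x' : Fin n → ZMod 2, (Ψ' * Ψ) x' x ≠ 0 →
      ∃ (x'' : Fin n → ZMod 2) (y : Fin k → ZMod 2) (y' : Fin k' → ZMod 2),
        f x y = x'' ∧ g x'' y' = x' := by
  intro x x' h
  rw [Matrix.mul_apply] at h
  obtain ⟨x'', _, hterm⟩ := Finset.exists_ne_zero_of_sum_ne_zero h
  have h1 : Ψ' x' x'' ≠ 0 := fun hz => hterm (by rw [hz, zero_mul])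
  have h2 : Ψ x'' x ≠ 0 := fun hz => hterm (by rw [hz, mul_zero])
  rw [hΨ' x' x''] at h1
  rw [hΨ x'' x] at h2
  obtain ⟨y', _, hy'⟩ := Finset.exists_ne_zero_of_sum_ne_zero h1
  obtain ⟨y, _, hy⟩ := Finset.exists_ne_zero_of_sum_ne_zero h2
  refine ⟨x'', y, y', ?_, ?_⟩
  · by_contra hc; exact hy (if_neg hc)
  · by_contra hc; exact hy' (if_neg hc)
end

section
/- For every b : ZMod 2, one has ∑ y : ZMod 2, (Complex.I) ^ (y.val) * (-1 : ℂ) ^ ((y * b).val) = Complex.exp (Real.pi * Complex.I / 4) * Real.sqrt 2 * (-Complex.I) ^ (b.val). (Identity underlying the (ω) rewrite rule: summing the phases i^y (-1)^{y·b} over the path variable y yields a global phase ω = e^{iπ/4}, a normalization factor √2, and a residual conditional phase (-i)^b.) -/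
/-! The sum has only the two terms `1` and `i (-1)^b`, that is `1 + i` or `1 - i`; since
`1 - i = (1 + i)(-i)`, it equals `(1 + i)(-i)^b`, and `1 + i = √2 e^{iπ/4}`. -/

open Complex

theorem ZMod.sum_univ_two {M : Type*} [AddCommMonoid M] (f : ZMod 2 → M) :
    ∑ y, f y = f 0 + f 1 :=
  Fin.sum_univ_two f

theorem Complex.exp_pi_mul_I_div_four_mul_sqrt_two :
    exp (Real.pi * I / 4) * (Real.sqrt 2 : ℂ) = 1 + I := by
  have h_arg : (Real.pi : ℂ) * I / 4 = ((Real.pi / 4 : ℝ) : ℂ) * I := by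
    push_cast
    ring
  have h_sqrt : (Real.sqrt 2 : ℂ) * Real.sqrt 2 = 2 := by
    exact_mod_cast Real.mul_self_sqrt zero_le_two
  rw [h_arg, exp_mul_I, ← ofReal_cos, ← ofReal_sin, Real.cos_pi_div_four,
    Real.sin_pi_div_four]
  push_cast
  linear_combination (1 + I) / 2 * h_sqrt

theorem Complex.one_add_I_mul_neg_one_pow (b : ZMod 2) :
    1 + I * (-1) ^ b.val = (1 + I) * (-I) ^ b.val := by
  obtain rfl | rfl : b = 0 ∨ b = 1 := by revert b; decide
  · simp
  · simp only [ZMod.val_one, pow_one]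
    linear_combination I_sq

theorem interference_omega_rule (b : ZMod 2) :
    ∑ y : ZMod 2, (Complex.I) ^ (y.val) * (-1 : ℂ) ^ ((y * b).val) =
      Complex.exp ((Real.pi : ℂ) * Complex.I / 4) * (Real.sqrt 2 : ℂ) *
        (-Complex.I) ^ (b.val) := by
  rw [ZMod.sum_univ_two, exp_pi_mul_I_div_four_mul_sqrt_two, ← one_add_I_mul_neg_one_pow]
  simp only [zero_mul, one_mul, ZMod.val_zero, ZMod.val_one, pow_zero, pow_one]
end
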